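/- arXiv:math/0703449 — 6 statements merged into one kernel-verified Lean document; each statement's English description precedes it below -/
import Mathlib

section
/- Let f ∈ 𝔪 ⊂ ℂ[[x₁,…,xₙ]] with μ(f) = dim_ℂ Q(f) finite and τ(f) = μ(f) − 1. Then the annihilator of the residue class of f in the Milnor algebra Q(f) is exactly the maximal ideal of the local ring Q(f); equivalently, 𝔪·f ⊆ J(f). -/
/-!
Let `I = J(f) : f` be the ideal of those `g` with `g f ∈ J(f)`. Multiplication by `f` gives an
exact sequence of `ℂ`-vector spaces `0 → 𝒪/I → Q(f) → T(f) → 0`, so `dim 𝒪/I = μ - τ = 1`.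
An ideal of codimension one is maximal, and `𝒪 = ℂ[[x₁,…,xₙ]]` is local, hence `I = 𝔪`.
-/

/-- The `i`-th formal partial derivative of a multivariate formal power series. -/
noncomputable def pderiv {n : ℕ} (i : Fin n) (f : MvPowerSeries (Fin n) ℂ) :
    MvPowerSeries (Fin n) ℂ :=
  fun m => ((m i + 1 : ℕ) : ℂ) * MvPowerSeries.coeff (m + Finsupp.single i 1) f

/-- The Jacobian ideal of `f`, generated by the partial derivatives of `f`. -/
noncomputable def jacobianIdeal {n : ℕ} (f : MvPowerSeries (Fin n) ℂ) :
    Ideal (MvPowerSeries (Fin n) ℂ) :=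
  Ideal.span (Set.range fun i => pderiv i f)

/-- The Tjurina ideal of `f`: the ideal `(f) + J(f)`. -/
noncomputable def tjurinaIdeal {n : ℕ} (f : MvPowerSeries (Fin n) ℂ) :
    Ideal (MvPowerSeries (Fin n) ℂ) :=
  Ideal.span {f} ⊔ jacobianIdeal f

section Codimension

variable {K R : Type*} [Field K] [CommRing R] [Algebra K R]

theorem Ideal.isMaximal_of_finrank_quotient_eq_one {I : Ideal R}
    (h : Module.finrank K (R ⧸ I) = 1) : I.IsMaximal := by
  have hbij := Algebra.finrank_eq_one_iff_bijective_algebraMap.mp h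
  exact Ideal.Quotient.maximal_of_isField I
    ((RingEquiv.ofBijective (algebraMap K (R ⧸ I)) hbij).symm.toMulEquiv.isField
      (Field.toIsField K))

noncomputable def Ideal.mulModLinearMap (J : Ideal R) (f : R) : R →ₗ[K] R ⧸ J :=
  (Ideal.Quotient.mkₐ K J).toLinearMap ∘ₗ LinearMap.mulRight K f

theorem Ideal.ker_mulModLinearMap (J : Ideal R) (f : R) :
    LinearMap.ker (J.mulModLinearMap (K := K) f) =
      (J.colon (Ideal.span {f})).restrictScalars K := by
  ext g
  simp only [Ideal.mulModLinearMap, LinearMap.mem_ker, LinearMap.coe_comp, Function.comp_apply,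
    LinearMap.mulRight_apply, AlgHom.toLinearMap_apply, Ideal.Quotient.mkₐ_eq_mk,
    Ideal.Quotient.eq_zero_iff_mem, Submodule.restrictScalars_mem, Ideal.mem_colon_span_singleton]

theorem Ideal.range_mulModLinearMap (J : Ideal R) (f : R) :
    LinearMap.range (J.mulModLinearMap (K := K) f) =
      ((Ideal.span {f}).map (Ideal.Quotient.mkₐ K J)).restrictScalars K := by
  ext x
  simp only [Ideal.mulModLinearMap, LinearMap.mem_range, LinearMap.coe_comp, Function.comp_apply,
    LinearMap.mulRight_apply, AlgHom.toLinearMap_apply, Ideal.map_span, Set.image_singleton,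
    Submodule.restrictScalars_mem, Ideal.mem_span_singleton']
  constructor
  · rintro ⟨g, rfl⟩
    exact ⟨Ideal.Quotient.mkₐ K J g, (map_mul _ g f).symm⟩
  · rintro ⟨y, rfl⟩
    obtain ⟨g, rfl⟩ := Ideal.Quotient.mkₐ_surjective K J y
    exact ⟨g, map_mul _ g f⟩

theorem Ideal.finrank_quotient_colon_add_finrank_quotient_sup (J : Ideal R) (f : R)
    [FiniteDimensional K (R ⧸ J)] :
    Module.finrank K (R ⧸ J.colon (Ideal.span {f})) +
        Module.finrank K (R ⧸ J ⊔ Ideal.span {f}) =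
      Module.finrank K (R ⧸ J) := by
  have hcolon : Module.finrank K (R ⧸ J.colon (Ideal.span {f})) =
      Module.finrank K (LinearMap.range (J.mulModLinearMap (K := K) f)) := by
    rw [← (Submodule.Quotient.restrictScalarsEquiv K _).finrank_eq, ← J.ker_mulModLinearMap]
    exact (LinearMap.quotKerEquivRange _).finrank_eq
  have hsup : Module.finrank K (R ⧸ J ⊔ Ideal.span {f}) =
      Module.finrank K ((R ⧸ J) ⧸ LinearMap.range (J.mulModLinearMap (K := K) f)) := by
    rw [J.range_mulModLinearMap, (Submodule.Quotient.restrictScalarsEquiv K _).finrank_eq]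
    exact (DoubleQuot.quotQuotEquivQuotSupₐ K J (Ideal.span {f})).toLinearEquiv.finrank_eq.symm
  rw [hcolon, hsup, add_comm]
  exact Submodule.finrank_quotient_add_finrank _

end Codimension

theorem annihilator_eq_maximalIdeal_of_tjurina_eq_milnor_sub_one_general {n : ℕ}
    (f : MvPowerSeries (Fin n) ℂ)
    (htau : Module.finrank ℂ (MvPowerSeries (Fin n) ℂ ⧸ tjurinaIdeal f) + 1 =
      Module.finrank ℂ (MvPowerSeries (Fin n) ℂ ⧸ jacobianIdeal f)) :
    ∀ g : MvPowerSeries (Fin n) ℂ,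
      g * f ∈ jacobianIdeal f ↔ MvPowerSeries.constantCoeff g = 0 := by
  intro g
  have : FiniteDimensional ℂ (MvPowerSeries (Fin n) ℂ ⧸ jacobianIdeal f) :=
    Module.finite_of_finrank_pos (by omega)
  have hcodim : Module.finrank ℂ
      (MvPowerSeries (Fin n) ℂ ⧸ (jacobianIdeal f).colon (Ideal.span {f})) = 1 := by
    have := (jacobianIdeal f).finrank_quotient_colon_add_finrank_quotient_sup (K := ℂ) f
    rw [tjurinaIdeal, sup_comm] at htau
    omega
  have hmax : (jacobianIdeal f).colon (Ideal.span {f}) = IsLocalRing.maximalIdeal _ :=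
    IsLocalRing.eq_maximalIdeal (Ideal.isMaximal_of_finrank_quotient_eq_one hcodim)
  rw [← Ideal.mem_colon_span_singleton, hmax, IsLocalRing.mem_maximalIdeal, mem_nonunits_iff,
    MvPowerSeries.isUnit_iff_constantCoeff, isUnit_iff_ne_zero, not_not]

/-- If `f ∈ 𝔪` has finite Milnor number `μ` and Tjurina number `τ = μ - 1`, then the
annihilator of the class of `f` in the Milnor algebra `Q(f)` is exactly the maximal ideal
of `Q(f)`; equivalently, for every `g`, `g·f ∈ J(f)` iff `g` has zero constant term
(so in particular `𝔪·f ⊆ J(f)`). -/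
theorem annihilator_eq_maximalIdeal_of_tjurina_eq_milnor_sub_one {n : ℕ}
    (f : MvPowerSeries (Fin n) ℂ)
    (hf : MvPowerSeries.constantCoeff f = 0)
    (hfin : FiniteDimensional ℂ (MvPowerSeries (Fin n) ℂ ⧸ jacobianIdeal f))
    (htau : Module.finrank ℂ (MvPowerSeries (Fin n) ℂ ⧸ tjurinaIdeal f) + 1 =
      Module.finrank ℂ (MvPowerSeries (Fin n) ℂ ⧸ jacobianIdeal f)) :
    ∀ g : MvPowerSeries (Fin n) ℂ,
      g * f ∈ jacobianIdeal f ↔ MvPowerSeries.constantCoeff g = 0 :=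
  annihilator_eq_maximalIdeal_of_tjurina_eq_milnor_sub_one_general f htau
end

section
/- Let f ∈ 𝔪 ⊂ ℂ[[x₁,…,xₙ]] with μ(f) = dim_ℂ Q(f) finite and τ(f) = μ(f) − 1. Then 𝔪·f ⊆ 𝔪·J(f), i.e. for every g ∈ 𝔪 the product g·f can be written as Σᵢ hᵢ·∂f/∂xᵢ with all hᵢ ∈ 𝔪. -/
/-!
Write `g * f = ∑ hᵢ ∂ᵢf`; this is possible because `τ = μ - 1` makes the image of `(f)` in the
Milnor algebra a line, and multiplication by the nilpotent image of `g` can only kill it.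
The vector field `D = ∑ hᵢ ∂ᵢ` then satisfies `D f = g f` and
`D (∂ⱼf) = ∂ⱼ(g f) - ∑ (∂ⱼhᵢ) ∂ᵢf`, so it preserves the Tjurina ideal `T = (f) + J(f)`.
If some `hᵢ` were a unit, so would be `D xᵢ`; since `xᵢ ^ N ∈ J(f) ⊆ T` for some `N`, and
`D (xᵢ ^ N) = N xᵢ ^ (N - 1) D xᵢ` with `N` invertible, the exponent could be lowered down to
`1 ∈ T`, impossible as `T ⊆ 𝔪`.
-/

open Module

namespace MvPowerSeries

variable {σ R : Type*} [CommSemiring R]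

theorem pderiv_pderiv_comm (i j : σ) (f : MvPowerSeries σ R) :
    pderiv R i (pderiv R j f) = pderiv R j (pderiv R i f) := by
  classical
  ext m
  simp only [coeff_pderiv, add_right_comm m (Finsupp.single i 1), Finsupp.add_apply,
    Finsupp.single_apply]
  by_cases h : i = j
  · subst h; rfl
  · simp only [if_neg h, if_neg (Ne.symm h), add_zero]
    ring

variable [Fintype σ]

noncomputable def vectorField (h : σ → MvPowerSeries σ R) :
    Derivation R (MvPowerSeries σ R) (MvPowerSeries σ R) :=
  ∑ i, h i • pderiv R i

theorem vectorField_apply (h : σ → MvPowerSeries σ R) (a : MvPowerSeries σ R) :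
    vectorField h a = ∑ i, h i * pderiv R i a := by
  rw [vectorField, ← Derivation.coeFnAddMonoidHom_apply, map_sum, Finset.sum_apply]
  rfl

theorem vectorField_X [DecidableEq σ] (h : σ → MvPowerSeries σ R) (i : σ) :
    vectorField h (X i) = h i := by
  simp [vectorField_apply, pderiv_X, Pi.single_apply]

theorem pderiv_vectorField (h : σ → MvPowerSeries σ R) (j : σ) (a : MvPowerSeries σ R) :
    pderiv R j (vectorField h a) =
      vectorField h (pderiv R j a) + ∑ i, pderiv R j (h i) * pderiv R i a := by
  simp only [vectorField_apply, map_sum, Derivation.leibniz, smul_eq_mul, pderiv_pderiv_comm j,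
    Finset.sum_add_distrib]
  exact congrArg _ (Finset.sum_congr rfl fun _ _ => mul_comm _ _)

end MvPowerSeries

theorem Derivation.map_mem_span_of_map_mem {R A : Type*} [CommSemiring R] [CommRing A]
    [Algebra R A] (D : Derivation R A A) {S : Set A} (hS : ∀ s ∈ S, D s ∈ Ideal.span S) {a : A}
    (ha : a ∈ Ideal.span S) : D a ∈ Ideal.span S := by
  induction ha using Submodule.span_induction with
  | mem s hs => exact hS s hs
  | zero => simp
  | add x y _ _ hx hy => simpa using add_mem hx hy
  | smul r x hx hDx =>
    rw [smul_eq_mul, Derivation.leibniz]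
    exact add_mem (Ideal.mul_mem_left _ r hDx) (Ideal.mul_mem_right _ _ hx)

theorem Ideal.eq_top_of_derivation_isUnit {K A : Type*} [Field K] [CharZero K] [CommRing A]
    [Algebra K A] {I : Ideal A} (D : Derivation K A A) (hI : ∀ a ∈ I, D a ∈ I) {x : A}
    (hx : IsUnit (D x)) {N : ℕ} (hN : x ^ N ∈ I) : I = ⊤ := by
  induction N with
  | zero => exact I.eq_top_of_isUnit_mem hN (by simp)
  | succ N ih =>
    apply ih
    have h := hI _ hN
    rw [Derivation.leibniz_pow, Nat.add_sub_cancel, ← Nat.cast_smul_eq_nsmul K, smul_eq_mul] at h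
    rw [← Ideal.mul_unit_mem_iff_mem I hx]
    exact ((I.restrictScalars K).smul_mem_iff (Nat.cast_ne_zero.mpr N.succ_ne_zero)).mp h

theorem IsLocalRing.isNilpotent_mk_of_mem_maximalIdeal {R : Type*} [CommRing R] [IsLocalRing R]
    {J : Ideal R} [IsArtinianRing (R ⧸ J)] (hJ : J ≠ ⊤) {a : R}
    (ha : a ∈ IsLocalRing.maximalIdeal R) : IsNilpotent (Ideal.Quotient.mk J a) := by
  have : Nontrivial (R ⧸ J) := Ideal.Quotient.nontrivial_iff.mpr hJ
  have : IsLocalRing (R ⧸ J) := .of_surjective' _ Ideal.Quotient.mk_surjective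
  have : IsLocalHom (Ideal.Quotient.mk J) := .of_surjective _ Ideal.Quotient.mk_surjective
  rw [Ring.KrullDimLE.isNilpotent_iff_mem_nonunits, mem_nonunits_iff, isUnit_map_iff]
  exact ha

theorem mul_eq_zero_of_finrank_span_eq_one {K Q : Type*} [Field K] [CommRing Q] [Algebra K Q]
    {a g : Q} (ha : finrank K ((Ideal.span {a}).restrictScalars K) = 1) (hg : IsNilpotent g) :
    g * a = 0 := by
  have ha₀ : a ≠ 0 := by
    rintro rfl
    rw [Ideal.span_singleton_eq_bot.mpr rfl, Submodule.restrictScalars_bot, finrank_bot] at ha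
    exact zero_ne_one ha
  set L := (Ideal.span {a}).restrictScalars K
  have : FiniteDimensional K L := Module.finite_of_finrank_eq_succ ha
  have hline : K ∙ a = L :=
    Submodule.eq_of_le_of_finrank_le
      ((Submodule.span_singleton_le_iff_mem _ _).mpr (Ideal.subset_span rfl))
      (by rw [ha, finrank_span_singleton ha₀])
  obtain ⟨c, hc⟩ : ∃ c : K, c • a = g * a := by
    rw [← Submodule.mem_span_singleton, hline]
    exact Ideal.mul_mem_left _ g (Ideal.subset_span rfl)
  have hpow : ∀ k : ℕ, g ^ k * a = c ^ k • a := by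
    intro k
    induction k with
    | zero => simp
    | succ k ih => rw [pow_succ', mul_assoc, ih, mul_smul_comm, ← hc, smul_smul, ← pow_succ]
  obtain ⟨N, hN⟩ := hg
  have hc₀ : c = 0 := by
    have := hpow N
    rw [hN, zero_mul, eq_comm, smul_eq_zero] at this
    exact pow_eq_zero_iff'.mp (this.resolve_right ha₀) |>.1
  rw [← hc, hc₀, zero_smul]

theorem finrank_span_mk_add_finrank_quotient_sup {K A : Type*} [Field K] [CommRing A]
    [Algebra K A] (J : Ideal A) [FiniteDimensional K (A ⧸ J)] (a : A) :
    finrank K ((Ideal.span {Ideal.Quotient.mk J a}).restrictScalars K) +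
      finrank K (A ⧸ Ideal.span {a} ⊔ J) = finrank K (A ⧸ J) := by
  set L := Ideal.span {Ideal.Quotient.mk J a}
  have hL : L = (Ideal.span {a}).map (Ideal.Quotient.mkₐ K J) := by
    rw [Ideal.map_span, Set.image_singleton, Ideal.Quotient.mkₐ_eq_mk]
  have e : finrank K ((A ⧸ J) ⧸ L.restrictScalars K) =
      finrank K (A ⧸ Ideal.span {a} ⊔ J) := by
    rw [(Submodule.Quotient.restrictScalarsEquiv K L).finrank_eq, sup_comm, hL]
    exact (DoubleQuot.quotQuotEquivQuotSupₐ K J _).toLinearEquiv.finrank_eq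
  rw [← e, add_comm]
  exact Submodule.finrank_quotient_add_finrank _

theorem Ideal.mul_mem_of_finrank_quotient_sup_add_one {K A : Type*} [Field K] [CommRing A]
    [Algebra K A] (J : Ideal A) [FiniteDimensional K (A ⧸ J)] {a g : A}
    (h : finrank K (A ⧸ Ideal.span {a} ⊔ J) + 1 = finrank K (A ⧸ J))
    (hg : IsNilpotent (Ideal.Quotient.mk J g)) : g * a ∈ J := by
  rw [← Ideal.Quotient.eq_zero_iff_mem, map_mul]
  refine mul_eq_zero_of_finrank_span_eq_one (K := K) ?_ hg
  have := finrank_span_mk_add_finrank_quotient_sup (K := K) J a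
  omega

theorem MvPowerSeries.mem_maximalIdeal_iff {σ K : Type*} [Field K] {a : MvPowerSeries σ K} :
    a ∈ IsLocalRing.maximalIdeal (MvPowerSeries σ K) ↔ constantCoeff a = 0 := by
  rw [IsLocalRing.mem_maximalIdeal, mem_nonunits_iff, isUnit_iff_constantCoeff,
    isUnit_iff_ne_zero, not_not]

section

open MvPowerSeries (constantCoeff vectorField vectorField_apply pderiv_vectorField)

variable {n : ℕ} {f : MvPowerSeries (Fin n) ℂ}

theorem pderiv_eq_mvPowerSeries_pderiv (i : Fin n) (f : MvPowerSeries (Fin n) ℂ) :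
    pderiv i f = MvPowerSeries.pderiv ℂ i f := by
  ext m
  rw [MvPowerSeries.coeff_pderiv, mul_comm, ← Nat.cast_succ, MvPowerSeries.coeff_apply]
  rfl

theorem jacobianIdeal_ne_top
    (htau : finrank ℂ (MvPowerSeries (Fin n) ℂ ⧸ tjurinaIdeal f) + 1 =
      finrank ℂ (MvPowerSeries (Fin n) ℂ ⧸ jacobianIdeal f)) :
    jacobianIdeal f ≠ ⊤ := by
  intro hJ
  have hT : tjurinaIdeal f = ⊤ := top_le_iff.mp (hJ ▸ le_sup_right)
  have : Subsingleton (MvPowerSeries (Fin n) ℂ ⧸ jacobianIdeal f) :=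
    Ideal.Quotient.subsingleton_iff.mpr hJ
  have : Subsingleton (MvPowerSeries (Fin n) ℂ ⧸ tjurinaIdeal f) :=
    Ideal.Quotient.subsingleton_iff.mpr hT
  simp [finrank_zero_of_subsingleton] at htau

theorem tjurinaIdeal_ne_top (hf : constantCoeff f = 0) (hJ : jacobianIdeal f ≠ ⊤) :
    tjurinaIdeal f ≠ ⊤ := by
  refine ne_top_of_le_ne_top (IsLocalRing.maximalIdeal.isMaximal _).ne_top (sup_le ?_ ?_)
  · exact Ideal.span_le.mpr
      (Set.singleton_subset_iff.mpr (MvPowerSeries.mem_maximalIdeal_iff.mpr hf))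
  · exact IsLocalRing.le_maximalIdeal hJ

theorem tjurinaIdeal_eq_span :
    tjurinaIdeal f = Ideal.span (insert f (Set.range fun i => MvPowerSeries.pderiv ℂ i f)) := by
  simp only [Ideal.span_insert, tjurinaIdeal, jacobianIdeal, pderiv_eq_mvPowerSeries_pderiv]

theorem vectorField_mem_tjurinaIdeal {g : MvPowerSeries (Fin n) ℂ}
    {h : Fin n → MvPowerSeries (Fin n) ℂ} (hrel : g * f = ∑ i, h i * pderiv i f)
    {a : MvPowerSeries (Fin n) ℂ} (ha : a ∈ tjurinaIdeal f) :
    vectorField h a ∈ tjurinaIdeal f := by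
  have hDf : vectorField h f = g * f := by
    simp only [vectorField_apply, hrel, pderiv_eq_mvPowerSeries_pderiv]
  rw [tjurinaIdeal_eq_span] at ha ⊢
  have hf : f ∈ Ideal.span (insert f (Set.range fun i => MvPowerSeries.pderiv ℂ i f)) :=
    Ideal.subset_span (Set.mem_insert _ _)
  have hpf (j : Fin n) : MvPowerSeries.pderiv ℂ j f ∈
      Ideal.span (insert f (Set.range fun i => MvPowerSeries.pderiv ℂ i f)) :=
    Ideal.subset_span (Set.mem_insert_of_mem _ ⟨j, rfl⟩)
  refine (vectorField h).map_mem_span_of_map_mem ?_ ha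
  rintro _ (rfl | ⟨j, rfl⟩)
  · exact hDf ▸ Ideal.mul_mem_left _ g hf
  · have hcomm := pderiv_vectorField h j f
    rw [hDf, Derivation.leibniz, smul_eq_mul, smul_eq_mul] at hcomm
    rw [eq_sub_of_add_eq hcomm.symm]
    exact sub_mem (add_mem (Ideal.mul_mem_left _ g (hpf j)) (Ideal.mul_mem_right _ _ hf))
      (sum_mem fun i _ => Ideal.mul_mem_left _ _ (hpf i))

end

/-- If `f ∈ 𝔪` has finite Milnor number `μ` and Tjurina number `τ = μ - 1`, then
`𝔪·f ⊆ 𝔪·J(f)`: every product `g·f` with `g ∈ 𝔪` can be written as `Σ hᵢ·∂f/∂xᵢ`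
with all `hᵢ ∈ 𝔪`. -/
theorem maximalIdeal_mul_self_subset_maximalIdeal_mul_jacobian {n : ℕ}
    (f : MvPowerSeries (Fin n) ℂ)
    (hf : MvPowerSeries.constantCoeff f = 0)
    (hfin : FiniteDimensional ℂ (MvPowerSeries (Fin n) ℂ ⧸ jacobianIdeal f))
    (htau : Module.finrank ℂ (MvPowerSeries (Fin n) ℂ ⧸ tjurinaIdeal f) + 1 =
      Module.finrank ℂ (MvPowerSeries (Fin n) ℂ ⧸ jacobianIdeal f)) :
    ∀ g : MvPowerSeries (Fin n) ℂ, MvPowerSeries.constantCoeff g = 0 →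
      ∃ h : Fin n → MvPowerSeries (Fin n) ℂ,
        (∀ i, MvPowerSeries.constantCoeff (h i) = 0) ∧
        g * f = ∑ i, h i * pderiv i f := by
  intro g hg
  have hJ := jacobianIdeal_ne_top htau
  have : IsArtinianRing (MvPowerSeries (Fin n) ℂ ⧸ jacobianIdeal f) := .of_finite ℂ _
  have hnil {a} (ha : MvPowerSeries.constantCoeff a = 0) :
      IsNilpotent (Ideal.Quotient.mk (jacobianIdeal f) a) :=
    IsLocalRing.isNilpotent_mk_of_mem_maximalIdeal hJ (MvPowerSeries.mem_maximalIdeal_iff.mpr ha)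
  obtain ⟨h, hrel⟩ := (Submodule.mem_span_range_iff_exists_fun _).mp
    ((jacobianIdeal f).mul_mem_of_finrank_quotient_sup_add_one htau (hnil hg))
  simp only [smul_eq_mul] at hrel
  refine ⟨h, fun i => ?_, hrel.symm⟩
  by_contra hi
  obtain ⟨N, hN⟩ := hnil (MvPowerSeries.constantCoeff_X i)
  have hXN : MvPowerSeries.X i ^ N ∈ tjurinaIdeal f :=
    (le_sup_right : jacobianIdeal f ≤ tjurinaIdeal f)
      (Ideal.Quotient.eq_zero_iff_mem.mp (by rw [map_pow, hN]))
  have hDX : IsUnit (MvPowerSeries.vectorField h (MvPowerSeries.X i)) := by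
    rw [MvPowerSeries.vectorField_X]
    exact MvPowerSeries.isUnit_iff_constantCoeff.mpr (isUnit_iff_ne_zero.mpr hi)
  exact tjurinaIdeal_ne_top hf hJ <| Ideal.eq_top_of_derivation_isUnit _
    (fun _ => vectorField_mem_tjurinaIdeal hrel.symm) hDX hXN
end

section
/- Let q, r ≥ 2 be integers and let β, γ ∈ ℂ both be nonzero. Then there exist nonzero a, b, c ∈ ℂ such that the diagonal linear substitution x ↦ a·t, y ↦ b·u, z ↦ c·v induces an isomorphism of local ℂ-algebras ℂ[[x,y,z]]/(yz, q·y^{q−1}+xz, r·z^{r−1}+xy) ≅ ℂ[[t,u,v]]/(uv, tv − β·u^{q−1}, tu − γ·v^{r−1}). In particular the Milnor algebra Q(y^q + z^r + xyz) of the non-isolated limit singularity T_{∞,q,r} is isomorphic to ℂ[[t,u,v]]/(uv, tv − d_q·u^{q−1}, tu − e_r·v^{r−1}) whenever the coefficients d_q, e_r are both nonzero. -/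
/-!
Rescaling the variables by nonzero constants `x ↦ a t`, `y ↦ b u`, `z ↦ c v` multiplies the
generators `yz`, `q y^{q-1} + xz`, `r z^{r-1} + xy` of the Jacobian ideal by the units `bc`, `ac`,
`ab` and turns them into `uv`, `tv - β u^{q-1}`, `tu - γ v^{r-1}` as soon as
`q b^{q-1} = -β a c` and `r c^{r-1} = -γ a b`. With `c = 1` and `a = -r / (γ b)` these two
conditions reduce to `b^q = β r / (γ q)`, solvable since `ℂ` is algebraically closed.
-/

open MvPowerSeries

/-- The Jacobian ideal of the non-isolated limit singularity `T_{∞,q,r} : y^q + z^r + xyz`. -/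
noncomputable def limitJacobianIdeal (q r : ℕ) : Ideal (MvPowerSeries (Fin 3) ℂ) :=
  Ideal.span {X 1 * X 2,
    (q : MvPowerSeries (Fin 3) ℂ) * X 1 ^ (q - 1) + X 0 * X 2,
    (r : MvPowerSeries (Fin 3) ℂ) * X 2 ^ (r - 1) + X 0 * X 1}

/-- The minimally embedded modular ideal `(uv, tv - β·u^{q-1}, tu - γ·v^{r-1})`. -/
noncomputable def limitModularIdeal (q r : ℕ) (β γ : ℂ) : Ideal (MvPowerSeries (Fin 3) ℂ) :=
  Ideal.span {X 1 * X 2,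
    X 0 * X 2 - C β * X 1 ^ (q - 1),
    X 0 * X 1 - C γ * X 2 ^ (r - 1)}

namespace MvPowerSeries

variable {σ R : Type*} [CommRing R]

theorem rescale_X (a : σ → R) (i : σ) : rescale a (X i) = C (a i) * X i := by
  classical
  ext n
  simp only [coeff_rescale, coeff_X, coeff_C_mul, mul_ite, mul_one, mul_zero]
  split_ifs with h
  · simp [h]
  · rfl

noncomputable def rescaleAlgEquiv (a : σ → Rˣ) :
    MvPowerSeries σ R ≃ₐ[R] MvPowerSeries σ R :=
  AlgEquiv.ofAlgHom (rescaleAlgHom fun i ↦ (a i : R))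
    (rescaleAlgHom fun i ↦ ((a i)⁻¹ : Rˣ))
    (by rw [← rescaleAlgHom_mul, ← rescaleAlgHom_one]; congr; ext; simp)
    (by rw [← rescaleAlgHom_mul, ← rescaleAlgHom_one]; congr; ext; simp)

theorem rescaleAlgEquiv_apply (a : σ → Rˣ) (f : MvPowerSeries σ R) :
    rescaleAlgEquiv a f = rescale (fun i ↦ (a i : R)) f :=
  rescaleAlgHom_apply _ f

theorem rescaleAlgEquiv_X (a : σ → Rˣ) (i : σ) :
    rescaleAlgEquiv a (X i) = C (a i : R) * X i := by
  rw [rescaleAlgEquiv_apply, rescale_X]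

end MvPowerSeries

theorem exists_units_limit_relations {K : Type*} [Field K] [IsSepClosed K] {q r : ℕ} {β γ : K}
    (hq : (q : K) ≠ 0) (hr : (r : K) ≠ 0) (hβ : β ≠ 0) (hγ : γ ≠ 0) :
    ∃ a b c : Kˣ, (q : K) * b ^ (q - 1) = -(β * (a * c)) ∧
      (r : K) * c ^ (r - 1) = -(γ * (a * b)) := by
  have : NeZero (q : K) := ⟨hq⟩
  obtain ⟨b, hb⟩ := IsSepClosed.exists_pow_nat_eq (β * r / (γ * q)) q
  have hq₀ : q ≠ 0 := by rintro rfl; simp at hq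
  have hb₀ : b ≠ 0 := by
    rintro rfl
    simp [zero_pow hq₀, hβ, hγ, hq, hr, eq_comm] at hb
  refine ⟨Units.mk0 (-r / (γ * b)) (by simp [hr, hγ, hb₀]), Units.mk0 b hb₀, 1, ?_, ?_⟩
  all_goals simp only [Units.val_mk0, Units.val_one, mul_one, one_pow]
  · rw [← pow_sub_one_mul hq₀] at hb
    field_simp at hb ⊢
    linear_combination hb
  · field_simp

theorem map_rescaleAlgEquiv_limitJacobianIdeal {q r : ℕ} {β γ : ℂ} (a b c : ℂˣ)
    (hb : (q : ℂ) * b ^ (q - 1) = -(β * (a * c)))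
    (hc : (r : ℂ) * c ^ (r - 1) = -(γ * (a * b))) :
    Ideal.map (rescaleAlgEquiv ![a, b, c]) (limitJacobianIdeal q r) =
      limitModularIdeal q r β γ := by
  set φ := rescaleAlgEquiv (R := ℂ) ![a, b, c]
  have hb' := congrArg (C (σ := Fin 3)) hb
  have hc' := congrArg (C (σ := Fin 3)) hc
  simp only [map_mul, map_neg, map_pow, map_natCast] at hb' hc'
  have hφ₀ : φ (X 0) = C (a : ℂ) * X 0 := rescaleAlgEquiv_X _ 0
  have hφ₁ : φ (X 1) = C (b : ℂ) * X 1 := rescaleAlgEquiv_X _ 1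
  have hφ₂ : φ (X 2) = C (c : ℂ) * X 2 := rescaleAlgEquiv_X _ 2
  have h₁ : φ (X 1 * X 2) = C ((b * c : ℂˣ) : ℂ) * (X 1 * X 2) := by
    simp only [map_mul, hφ₁, hφ₂, Units.val_mul]
    ring
  have h₂ : φ ((q : MvPowerSeries (Fin 3) ℂ) * X 1 ^ (q - 1) + X 0 * X 2) =
      C ((a * c : ℂˣ) : ℂ) * (X 0 * X 2 - C β * X 1 ^ (q - 1)) := by
    simp only [map_add, map_mul, map_pow, map_natCast, hφ₀, hφ₁, hφ₂, Units.val_mul]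
    linear_combination X 1 ^ (q - 1) * hb'
  have h₃ : φ ((r : MvPowerSeries (Fin 3) ℂ) * X 2 ^ (r - 1) + X 0 * X 1) =
      C ((a * b : ℂˣ) : ℂ) * (X 0 * X 1 - C γ * X 2 ^ (r - 1)) := by
    simp only [map_add, map_mul, map_pow, map_natCast, hφ₀, hφ₁, hφ₂, Units.val_mul]
    linear_combination X 2 ^ (r - 1) * hc'
  rw [limitJacobianIdeal, limitModularIdeal, Ideal.map_span, Set.image_insert_eq,
    Set.image_insert_eq, Set.image_singleton, h₁, h₂, h₃]
  simp only [Ideal.span_insert, Ideal.span_singleton_mul_left_unit ((Units.isUnit _).map C)]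

/-- For `q, r ≥ 2` and nonzero `β, γ ∈ ℂ`, there are nonzero `a, b, c ∈ ℂ` such that the
diagonal substitution `x ↦ a·t`, `y ↦ b·u`, `z ↦ c·v` carries the Jacobian ideal of the
non-isolated limit singularity `y^q + z^r + xyz` onto the ideal
`(uv, tv - β·u^{q-1}, tu - γ·v^{r-1})`, and hence induces an isomorphism of the
corresponding local `ℂ`-algebras. -/
theorem milnorAlgebra_iso_modularAlgebra_limit (q r : ℕ) (hq : 2 ≤ q) (hr : 2 ≤ r)
    (β γ : ℂ) (hβ : β ≠ 0) (hγ : γ ≠ 0) :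
    ∃ (a b c : ℂ), a ≠ 0 ∧ b ≠ 0 ∧ c ≠ 0 ∧
      ∃ σ : MvPowerSeries (Fin 3) ℂ ≃ₐ[ℂ] MvPowerSeries (Fin 3) ℂ,
        σ (X 0) = C a * X 0 ∧
        σ (X 1) = C b * X 1 ∧
        σ (X 2) = C c * X 2 ∧
        Ideal.map σ.toAlgHom.toRingHom (limitJacobianIdeal q r) =
          limitModularIdeal q r β γ ∧
        Nonempty ((MvPowerSeries (Fin 3) ℂ ⧸ limitJacobianIdeal q r) ≃ₐ[ℂ]
          (MvPowerSeries (Fin 3) ℂ ⧸ limitModularIdeal q r β γ)) := by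
  obtain ⟨a, b, c, hb, hc⟩ := exists_units_limit_relations (K := ℂ) (q := q) (r := r)
    (Nat.cast_ne_zero.mpr (by omega)) (Nat.cast_ne_zero.mpr (by omega)) hβ hγ
  have hmap := map_rescaleAlgEquiv_limitJacobianIdeal a b c hb hc
  refine ⟨a, b, c, a.ne_zero, b.ne_zero, c.ne_zero, rescaleAlgEquiv ![a, b, c],
    rescaleAlgEquiv_X _ 0, rescaleAlgEquiv_X _ 1, rescaleAlgEquiv_X _ 2, hmap,
    ⟨Ideal.quotientEquivAlg _ _ _ hmap.symm⟩⟩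
end

section
/- Let p ≥ q ≥ r ≥ 2 be integers with 1/p + 1/q + 1/r < 1. At least two of the following three conditions hold — (i) ∃k, 1 ≤ k ≤ p, with 1/k + 1/q + 1/r = 1; (ii) ∃k, 1 ≤ k ≤ q, with 1/p + 1/k + 1/r = 1; (iii) ∃k, 1 ≤ k ≤ r, with 1/p + 1/q + 1/k = 1 — if and only if (p,q,r) is one of the five symmetric exceptions (4,4,4), (6,3,3), (6,4,2), (6,6,2), (6,6,3). -/
/-!
Each of the conditions (ii) and (iii) says that `1/p` plus two unit fractions is `1`. Two unit
fractions with sum below `1` add up to at most `1/2 + 1/3 = 5/6`, so either condition forces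
`p ≤ 6`, and any two of the three conditions include one of them. For `p > 6` both sides are
therefore false; for `p ≤ 6`, clearing denominators turns the statement into a finite check
over natural numbers.
-/

open Finset

theorem one_div_eq_one_or_eq_half_or_le_third {n : ℕ} (hn : 0 < n) :
    (1 : ℚ) / n = 1 ∨ (1 : ℚ) / n = 1 / 2 ∨ (1 : ℚ) / n ≤ 1 / 3 := by
  obtain rfl | rfl | hn3 : n = 1 ∨ n = 2 ∨ 3 ≤ n := by omega
  · norm_num
  · norm_num
  · exact Or.inr <| Or.inr <| one_div_le_one_div_of_le (by norm_num) (by exact_mod_cast hn3)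

theorem one_div_add_one_div_le_five_div_six {b c : ℕ} (hb : 0 < b) (hc : 0 < c)
    (h : (1 : ℚ) / b + 1 / c < 1) : (1 : ℚ) / b + 1 / c ≤ 5 / 6 := by
  have hb' : 0 < (1 : ℚ) / b := by positivity
  have hc' : 0 < (1 : ℚ) / c := by positivity
  rcases one_div_eq_one_or_eq_half_or_le_third hb with hb | hb | hb <;>
    rcases one_div_eq_one_or_eq_half_or_le_third hc with hc | hc | hc <;> linarith

theorem le_six_of_one_div_add_one_div_add_one_div_eq_one {a b c : ℕ} (ha : 0 < a) (hb : 0 < b)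
    (hc : 0 < c) (h : (1 : ℚ) / a + 1 / b + 1 / c = 1) : a ≤ 6 := by
  have ha' : 0 < (1 : ℚ) / a := by positivity
  have hbc := one_div_add_one_div_le_five_div_six hb hc (by linarith)
  have h6 : (1 : ℚ) / 6 ≤ 1 / a := by linarith
  exact_mod_cast (one_div_le_one_div (by norm_num) (by exact_mod_cast ha)).1 h6

theorem one_div_add_one_div_add_one_div_eq_one_iff {a b c : ℕ} (ha : 0 < a) (hb : 0 < b)
    (hc : 0 < c) : (1 : ℚ) / a + 1 / b + 1 / c = 1 ↔ b * c + a * c + a * b = a * b * c := by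
  rw [div_add_div _ _ (by positivity) (by positivity),
    div_add_div _ _ (by positivity) (by positivity), div_eq_one_iff_eq (by positivity)]
  norm_cast
  ring_nf

theorem one_div_add_one_div_add_one_div_lt_one_iff {a b c : ℕ} (ha : 0 < a) (hb : 0 < b)
    (hc : 0 < c) : (1 : ℚ) / a + 1 / b + 1 / c < 1 ↔ b * c + a * c + a * b < a * b * c := by
  rw [div_add_div _ _ (by positivity) (by positivity),
    div_add_div _ _ (by positivity) (by positivity), div_lt_one (by positivity)]
  norm_cast
  ring_nf

theorem exists_one_le_le_iff_exists_mem_Icc {n : ℕ} {P Q : ℕ → Prop}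
    (h : ∀ k, 0 < k → (P k ↔ Q k)) :
    (∃ k, 1 ≤ k ∧ k ≤ n ∧ P k) ↔ ∃ k ∈ Icc 1 n, Q k := by
  simp only [mem_Icc, and_assoc]
  exact exists_congr fun k => and_congr_right fun hk => and_congr_right fun _ => h k hk

theorem two_cleared_conditions_iff_of_le_six :
    ∀ p ∈ range 7, ∀ q ∈ range 7, ∀ r ∈ range 7, 2 ≤ r → r ≤ q → q ≤ p →
      q * r + p * r + p * q < p * q * r →
      (((∃ k ∈ Icc 1 p, q * r + k * r + k * q = k * q * r) ∧
          (∃ k ∈ Icc 1 q, k * r + p * r + p * k = p * k * r)) ∨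
        ((∃ k ∈ Icc 1 p, q * r + k * r + k * q = k * q * r) ∧
          (∃ k ∈ Icc 1 r, q * k + p * k + p * q = p * q * k)) ∨
        ((∃ k ∈ Icc 1 q, k * r + p * r + p * k = p * k * r) ∧
          (∃ k ∈ Icc 1 r, q * k + p * k + p * q = p * q * k)) ↔
        (p, q, r) = (4, 4, 4) ∨ (p, q, r) = (6, 3, 3) ∨ (p, q, r) = (6, 4, 2) ∨
          (p, q, r) = (6, 6, 2) ∨ (p, q, r) = (6, 6, 3)) := by
  decide

/-- For `p ≥ q ≥ r ≥ 2` with `1/p + 1/q + 1/r < 1`, at least two of the three conditions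
(i) `∃ 1 ≤ k ≤ p, 1/k + 1/q + 1/r = 1`, (ii) `∃ 1 ≤ k ≤ q, 1/p + 1/k + 1/r = 1`,
(iii) `∃ 1 ≤ k ≤ r, 1/p + 1/q + 1/k = 1` hold iff `(p,q,r)` is one of the five symmetric
exceptions `(4,4,4)`, `(6,3,3)`, `(6,4,2)`, `(6,6,2)`, `(6,6,3)`. -/
theorem two_conditions_iff_symmetric_exception (p q r : ℕ)
    (hr : 2 ≤ r) (hrq : r ≤ q) (hqp : q ≤ p)
    (h : (1 : ℚ) / p + 1 / q + 1 / r < 1) :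
    (((∃ k : ℕ, 1 ≤ k ∧ k ≤ p ∧ (1 : ℚ) / k + 1 / q + 1 / r = 1) ∧
        (∃ k : ℕ, 1 ≤ k ∧ k ≤ q ∧ (1 : ℚ) / p + 1 / k + 1 / r = 1)) ∨
      ((∃ k : ℕ, 1 ≤ k ∧ k ≤ p ∧ (1 : ℚ) / k + 1 / q + 1 / r = 1) ∧
        (∃ k : ℕ, 1 ≤ k ∧ k ≤ r ∧ (1 : ℚ) / p + 1 / q + 1 / k = 1)) ∨
      ((∃ k : ℕ, 1 ≤ k ∧ k ≤ q ∧ (1 : ℚ) / p + 1 / k + 1 / r = 1) ∧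
        (∃ k : ℕ, 1 ≤ k ∧ k ≤ r ∧ (1 : ℚ) / p + 1 / q + 1 / k = 1))) ↔
      (p, q, r) = (4, 4, 4) ∨ (p, q, r) = (6, 3, 3) ∨ (p, q, r) = (6, 4, 2) ∨
      (p, q, r) = (6, 6, 2) ∨ (p, q, r) = (6, 6, 3) := by
  have hr0 : 0 < r := by omega
  have hq0 : 0 < q := by omega
  have hp0 : 0 < p := by omega
  by_cases hp6 : p ≤ 6
  · rw [one_div_add_one_div_add_one_div_lt_one_iff hp0 hq0 hr0] at h
    rw [exists_one_le_le_iff_exists_mem_Icc fun k hk =>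
        one_div_add_one_div_add_one_div_eq_one_iff hk hq0 hr0,
      exists_one_le_le_iff_exists_mem_Icc fun k hk =>
        one_div_add_one_div_add_one_div_eq_one_iff hp0 hk hr0,
      exists_one_le_le_iff_exists_mem_Icc fun k hk =>
        one_div_add_one_div_add_one_div_eq_one_iff hp0 hq0 hk]
    exact two_cleared_conditions_iff_of_le_six p (mem_range.2 (by omega)) q
      (mem_range.2 (by omega)) r (mem_range.2 (by omega)) hr hrq hqp h
  · refine iff_of_false ?_ (by simp only [Prod.mk.injEq]; omega)
    have not_ii : ¬ ∃ k : ℕ, 1 ≤ k ∧ k ≤ q ∧ (1 : ℚ) / p + 1 / k + 1 / r = 1 :=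
      fun ⟨k, hk, _, e⟩ => hp6 (le_six_of_one_div_add_one_div_add_one_div_eq_one hp0 hk hr0 e)
    have not_iii : ¬ ∃ k : ℕ, 1 ≤ k ∧ k ≤ r ∧ (1 : ℚ) / p + 1 / q + 1 / k = 1 :=
      fun ⟨k, hk, _, e⟩ => hp6 (le_six_of_one_div_add_one_div_add_one_div_eq_one hp0 hq0 hk e)
    rintro (⟨-, hii⟩ | ⟨-, hiii⟩ | ⟨hii, -⟩)
    exacts [not_ii hii, not_iii hiii, not_ii hii]
end

section
/- There is an isomorphism of local ℂ-algebras ℂ[[s₁,s₂]]/(s₁⁴ − (30445/7392)·s₁²s₂² + (4240139/1897280)·s₁³s₂², s₂³ − (2696/48125)·s₁³s₂) ≅ ℂ[[x,y]]/(4x³ + 2xy³, 5y⁴ + 3x²y²). The right-hand side is the Milnor algebra of the exceptional unimodal singularity W₁₂: f = x⁴ + y⁵ + x²y³, and the left-hand side is the local ring of its modular stratum in minimal embedding. -/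
/-!
Write `s₁ = X 0`, `s₂ = X 1` on the left and `x = X 0`, `y = X 1` on the right. For
`α = 3 / (10ac)` and `ν² = -2cα³`, the substitution `s₁ ↦ αy`, `s₂ ↦ νx` sends the two
generators of the modular ideal to unit multiples of `f_y + t·x²y³` (with `t = -10bcα²`) and
of `f_x`; the constants are forced by matching the coefficients of `x²y²` and `xy³`. So the
modular ideal is the Jacobian ideal of `f` perturbed by a multiple of its socle monomial
`x²y³`. The shear `y ↦ y - (t/20)x²` removes the perturbation: it sends `f_x` and
`f_y + t·x²y³` to `f_x` and `f_y` modulo `𝔪·(f_x, f_y)`, and by Nakayama's lemma in the local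
ring `ℂ[[x,y]]` the two ideals coincide.
-/

open MvPowerSeries

noncomputable section

namespace MvPolynomial

variable {σ R : Type*} [CommRing R]

theorem constantCoeff_coe (p : MvPolynomial σ R) :
    MvPowerSeries.constantCoeff (p : MvPowerSeries σ R) = constantCoeff p := by
  rw [← MvPowerSeries.coeff_zero_eq_constantCoeff_apply, coeff_coe, constantCoeff_eq]

@[simp, norm_cast]
theorem coe_sub (p q : MvPolynomial σ R) :
    ((p - q : MvPolynomial σ R) : MvPowerSeries σ R) = ↑p - ↑q :=
  map_sub coeToMvPowerSeries.ringHom p q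

@[simp, norm_cast]
theorem coe_ofNat (n : ℕ) [n.AtLeastTwo] :
    ((ofNat(n) : MvPolynomial σ R) : MvPowerSeries σ R) = ofNat(n) :=
  map_ofNat coeToMvPowerSeries.ringHom n

end MvPolynomial

namespace MvPowerSeries

variable {σ R : Type*} [CommRing R]

def substAlgEquiv {a b : σ → MvPowerSeries σ R} (ha : HasSubst a) (hb : HasSubst b)
    (hab : ∀ s, subst a (b s) = X s) (hba : ∀ s, subst b (a s) = X s) :
    MvPowerSeries σ R ≃ₐ[R] MvPowerSeries σ R :=
  AlgEquiv.ofAlgHom (substAlgHom ha) (substAlgHom hb)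
    (AlgHom.ext fun f ↦ by simp [subst_comp_subst_apply hb ha, hab, subst_self])
    (AlgHom.ext fun f ↦ by simp [subst_comp_subst_apply ha hb, hba, subst_self])

theorem substAlgEquiv_apply {a b : σ → MvPowerSeries σ R} (ha : HasSubst a) (hb : HasSubst b)
    (hab : ∀ s, subst a (b s) = X s) (hba : ∀ s, subst b (a s) = X s) (f : MvPowerSeries σ R) :
    substAlgEquiv ha hb hab hba f = subst a f := by
  simp [substAlgEquiv]

theorem subst_coe_coe (v : σ → MvPolynomial σ R) (p : MvPolynomial σ R) :
    subst (fun s ↦ (v s : MvPowerSeries σ R)) (p : MvPowerSeries σ R) =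
      (MvPolynomial.aeval v p : MvPowerSeries σ R) := by
  rw [subst_coe]
  induction p using MvPolynomial.induction_on with
  | C r => simp [MvPowerSeries.algebraMap_apply]
  | add p q hp hq => simp [hp, hq]
  | mul_X p s hp => simp [hp]

section Polynomial

variable [Finite σ]

theorem hasSubst_coe {v : σ → MvPolynomial σ R} (hv : ∀ s, (v s).constantCoeff = 0) :
    HasSubst fun s ↦ (v s : MvPowerSeries σ R) :=
  hasSubst_of_constantCoeff_zero fun s ↦ by rw [MvPolynomial.constantCoeff_coe, hv]

def polynomialSubstAlgEquiv (v w : σ → MvPolynomial σ R) (hv : ∀ s, (v s).constantCoeff = 0)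
    (hw : ∀ s, (w s).constantCoeff = 0) (hvw : ∀ s, MvPolynomial.aeval v (w s) = .X s)
    (hwv : ∀ s, MvPolynomial.aeval w (v s) = .X s) :
    MvPowerSeries σ R ≃ₐ[R] MvPowerSeries σ R :=
  substAlgEquiv (hasSubst_coe hv) (hasSubst_coe hw)
    (fun s ↦ by rw [subst_coe_coe, hvw, MvPolynomial.coe_X])
    (fun s ↦ by rw [subst_coe_coe, hwv, MvPolynomial.coe_X])

theorem polynomialSubstAlgEquiv_coe (v w : σ → MvPolynomial σ R)
    (hv : ∀ s, (v s).constantCoeff = 0) (hw : ∀ s, (w s).constantCoeff = 0)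
    (hvw : ∀ s, MvPolynomial.aeval v (w s) = .X s) (hwv : ∀ s, MvPolynomial.aeval w (v s) = .X s)
    (p : MvPolynomial σ R) :
    polynomialSubstAlgEquiv v w hv hw hvw hwv p = (MvPolynomial.aeval v p : MvPowerSeries σ R) := by
  rw [polynomialSubstAlgEquiv, substAlgEquiv_apply, subst_coe_coe]

end Polynomial

variable {k : Type*} [Field k]

theorem coe_mem_maximalIdeal_iff {p : MvPolynomial σ k} :
    (p : MvPowerSeries σ k) ∈ IsLocalRing.maximalIdeal _ ↔ p.constantCoeff = 0 := by
  rw [IsLocalRing.mem_maximalIdeal, mem_nonunits_iff, isUnit_iff_constantCoeff,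
    MvPolynomial.constantCoeff_coe, isUnit_iff_ne_zero, not_not]

theorem coe_mem_maximalIdeal_mul_span_pair {p u A B q₁ q₂ : MvPolynomial σ k}
    (hu : u.constantCoeff ≠ 0) (hA : A.constantCoeff = 0) (hB : B.constantCoeff = 0)
    (h : u * p = A * q₁ + B * q₂) :
    (p : MvPowerSeries σ k) ∈
      IsLocalRing.maximalIdeal _ * Ideal.span {(q₁ : MvPowerSeries σ k), ↑q₂} := by
  have hu' : IsUnit (u : MvPowerSeries σ k) := by
    rw [isUnit_iff_constantCoeff, MvPolynomial.constantCoeff_coe]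
    exact hu.isUnit
  rw [← Ideal.mul_unit_mem_iff_mem _ hu', ← MvPolynomial.coe_mul, mul_comm p u, h,
    MvPolynomial.coe_add, MvPolynomial.coe_mul, MvPolynomial.coe_mul]
  exact add_mem
    (Ideal.mul_mem_mul (coe_mem_maximalIdeal_iff.2 hA) (Ideal.subset_span (by simp)))
    (Ideal.mul_mem_mul (coe_mem_maximalIdeal_iff.2 hB) (Ideal.subset_span (by simp)))

end MvPowerSeries

namespace Ideal

variable {R : Type*} [CommRing R]

theorem span_pair_mul_left_unit {u v : R} (hu : IsUnit u) (hv : IsUnit v) (x y : R) :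
    span {u * x, v * y} = span {x, y} := by
  rw [span_insert, span_insert x, span_singleton_mul_left_unit hu,
    span_singleton_mul_left_unit hv]

theorem span_range_eq_of_sub_mem_maximalIdeal_mul [IsLocalRing R] {ι : Type*} [Finite ι]
    {a b : ι → R} (h : ∀ i, a i - b i ∈ IsLocalRing.maximalIdeal R * span (Set.range b)) :
    span (Set.range a) = span (Set.range b) := by
  have hm : IsLocalRing.maximalIdeal R * span (Set.range b) ≤ span (Set.range b) := mul_le_right
  refine le_antisymm (span_le.2 ?_) ?_
  · rintro _ ⟨i, rfl⟩
    simpa using add_mem (hm (h i)) (subset_span ⟨i, rfl⟩ : b i ∈ span (Set.range b))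
  · refine Submodule.le_of_le_smul_of_le_jacobson_bot (Submodule.fg_span (Set.finite_range b))
      (IsLocalRing.maximalIdeal_le_jacobson ⊥) (span_le.2 ?_)
    rintro _ ⟨i, rfl⟩
    have := sub_mem (Submodule.mem_sup_left (subset_span ⟨i, rfl⟩ : a i ∈ span (Set.range a)))
      (Submodule.mem_sup_right (h i))
    simpa [smul_eq_mul] using this

end Ideal

namespace W12

local notation "𝐱" => (MvPolynomial.X 0 : MvPolynomial (Fin 2) ℂ)
local notation "𝐲" => (MvPolynomial.X 1 : MvPolynomial (Fin 2) ℂ)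

def fx : MvPolynomial (Fin 2) ℂ := 4 * 𝐱 ^ 3 + 2 * (𝐱 * 𝐲 ^ 3)

def fy : MvPolynomial (Fin 2) ℂ := 5 * 𝐲 ^ 4 + 3 * (𝐱 ^ 2 * 𝐲 ^ 2)

def fyAddSocle (t : ℂ) : MvPolynomial (Fin 2) ℂ := fy + t • (𝐱 ^ 2 * 𝐲 ^ 3)

def g₁ (a b : ℂ) : MvPolynomial (Fin 2) ℂ := 𝐱 ^ 4 - a • (𝐱 ^ 2 * 𝐲 ^ 2) + b • (𝐱 ^ 3 * 𝐲 ^ 2)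

def g₂ (c : ℂ) : MvPolynomial (Fin 2) ℂ := 𝐲 ^ 3 - c • (𝐱 ^ 3 * 𝐲)

def swapScale (α ν : ℂ) (hα : α ≠ 0) (hν : ν ≠ 0) :
    MvPowerSeries (Fin 2) ℂ ≃ₐ[ℂ] MvPowerSeries (Fin 2) ℂ :=
  polynomialSubstAlgEquiv ![α • 𝐲, ν • 𝐱] ![ν⁻¹ • 𝐲, α⁻¹ • 𝐱]
    (by simp [Fin.forall_fin_two]) (by simp [Fin.forall_fin_two])
    (by simp [Fin.forall_fin_two, smul_smul, hα, hν])
    (by simp [Fin.forall_fin_two, smul_smul, hα, hν])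

def shear (t : ℂ) : MvPowerSeries (Fin 2) ℂ ≃ₐ[ℂ] MvPowerSeries (Fin 2) ℂ :=
  polynomialSubstAlgEquiv ![𝐱, 𝐲 - (t / 20) • 𝐱 ^ 2] ![𝐱, 𝐲 + (t / 20) • 𝐱 ^ 2]
    (by simp [Fin.forall_fin_two]) (by simp [Fin.forall_fin_two])
    (by simp [Fin.forall_fin_two]) (by simp [Fin.forall_fin_two])

theorem swapScale_coe {α ν : ℂ} (hα : α ≠ 0) (hν : ν ≠ 0) (p : MvPolynomial (Fin 2) ℂ) :
    swapScale α ν hα hν p = (MvPolynomial.aeval ![α • 𝐲, ν • 𝐱] p : MvPowerSeries (Fin 2) ℂ) :=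
  polynomialSubstAlgEquiv_coe _ _ _ _ _ _ p

theorem shear_coe (t : ℂ) (p : MvPolynomial (Fin 2) ℂ) :
    shear t p = (MvPolynomial.aeval ![𝐱, 𝐲 - (t / 20) • 𝐱 ^ 2] p : MvPowerSeries (Fin 2) ℂ) :=
  polynomialSubstAlgEquiv_coe _ _ _ _ _ _ p

section SwapScale

variable {a b c α ν : ℂ} (hα₀ : α ≠ 0) (hν₀ : ν ≠ 0)

theorem swapScale_g₁ (hν : ν ^ 2 = -2 * c * α ^ 3) (hα : 10 * a * c * α = 3) :
    swapScale α ν hα₀ hν₀ (g₁ a b) =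
      C (α ^ 4 / 5) * (fyAddSocle (-10 * b * c * α ^ 2) : MvPowerSeries (Fin 2) ℂ) := by
  rw [swapScale_coe, ← MvPolynomial.coe_C, ← MvPolynomial.coe_mul]
  congr 1
  refine MvPolynomial.funext fun p ↦ ?_
  simp [g₁, fyAddSocle, fy]
  linear_combination (-a * α ^ 2 * p 1 ^ 2 * p 0 ^ 2 + b * α ^ 3 * p 1 ^ 3 * p 0 ^ 2) * hν
    + (α ^ 4 / 5 * p 0 ^ 2 * p 1 ^ 2) * hα

theorem swapScale_g₂ (hν : ν ^ 2 = -2 * c * α ^ 3) :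
    swapScale α ν hα₀ hν₀ (g₂ c) = C (ν ^ 3 / 4) * (fx : MvPowerSeries (Fin 2) ℂ) := by
  rw [swapScale_coe, ← MvPolynomial.coe_C, ← MvPolynomial.coe_mul]
  congr 1
  refine MvPolynomial.funext fun p ↦ ?_
  simp [g₂, fx]
  linear_combination (-(ν / 2) * p 0 * p 1 ^ 3) * hν

theorem map_span_swapScale (hν : ν ^ 2 = -2 * c * α ^ 3) (hα : 10 * a * c * α = 3) :
    (Ideal.span {(g₁ a b : MvPowerSeries (Fin 2) ℂ), ↑(g₂ c)}).map (swapScale α ν hα₀ hν₀) =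
      Ideal.span {↑fx, ↑(fyAddSocle (-10 * b * c * α ^ 2))} := by
  have hunit {z : ℂ} (hz : z ≠ 0) : IsUnit (C z : MvPowerSeries (Fin 2) ℂ) := hz.isUnit.map C
  rw [Ideal.map_span, Set.image_pair, swapScale_g₁ hα₀ hν₀ hν hα, swapScale_g₂ hα₀ hν₀ hν,
    Set.pair_comm, Ideal.span_pair_mul_left_unit (hunit (by simp [hν₀])) (hunit (by simp [hα₀]))]

end SwapScale

/- In both certificates below `10 - 3y` is a unit of `ℂ[[x,y]]` but not of `ℂ[x,y]`: the
congruences only hold locally at the origin. -/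

theorem shear_fx_sub_mem (t : ℂ) :
    shear t fx - fx ∈
      IsLocalRing.maximalIdeal _ * Ideal.span {(fx : MvPowerSeries (Fin 2) ℂ), ↑fy} := by
  rw [shear_coe, ← MvPolynomial.coe_sub]
  refine coe_mem_maximalIdeal_mul_span_pair (u := 10 - 3 * 𝐲)
    (A := (-3 / 4 * t) • 𝐲 ^ 2 + (3 / 80 * t ^ 2) • (𝐱 ^ 2 * 𝐲) + (-3 / 160 * t ^ 2) • 𝐲 ^ 4
      + (-9 / 800 * t ^ 2) • (𝐱 ^ 2 * 𝐲 ^ 2) + (-1 / 1600 * t ^ 3) • 𝐱 ^ 4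
      + (1 / 3200 * t ^ 3) • (𝐱 ^ 2 * 𝐲 ^ 3) + (3 / 16000 * t ^ 3) • (𝐱 ^ 4 * 𝐲)
      + (-1 / 6400 * t ^ 3) • 𝐲 ^ 6 + (-3 / 32000 * t ^ 3) • (𝐱 ^ 2 * 𝐲 ^ 4))
    (B := (3 / 10 * t) • (𝐱 * 𝐲) + (3 / 400 * t ^ 2) • (𝐱 * 𝐲 ^ 3)
      + (1 / 16000 * t ^ 3) • (𝐱 * 𝐲 ^ 5))
    (by simp [map_ofNat]) (by simp) (by simp) ?_
  refine MvPolynomial.funext fun p ↦ ?_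
  simp [fx, fy, map_ofNat]
  ring

theorem shear_fyAddSocle_sub_mem (t : ℂ) :
    shear t (fyAddSocle t) - fy ∈
      IsLocalRing.maximalIdeal _ * Ideal.span {(fx : MvPowerSeries (Fin 2) ℂ), ↑fy} := by
  rw [shear_coe, ← MvPolynomial.coe_sub]
  refine coe_mem_maximalIdeal_mul_span_pair (u := 10 - 3 * 𝐲)
    (A := (-3 / 4 * t) • (𝐱 * 𝐲) + (-3 / 16 * t ^ 2) • (𝐱 * 𝐲 ^ 2) + (3 / 160 * t ^ 2) • 𝐱 ^ 3
      + (-3 / 320 * t ^ 2) • (𝐱 * 𝐲 ^ 3) + (-9 / 1600 * t ^ 2 + 1 / 80 * t ^ 3) • (𝐱 ^ 3 * 𝐲)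
      + (-1 / 160 * t ^ 3) • (𝐱 * 𝐲 ^ 4) + (-3 / 800 * t ^ 3) • (𝐱 ^ 3 * 𝐲 ^ 2)
      + (-3 / 12800 * t ^ 4) • 𝐱 ^ 5 + (3 / 25600 * t ^ 4) • (𝐱 ^ 3 * 𝐲 ^ 3)
      + (9 / 128000 * t ^ 4) • (𝐱 ^ 5 * 𝐲))
    (B := (3 / 10 * t) • 𝐱 ^ 2 + (3 / 40 * t ^ 2) • (𝐱 ^ 2 * 𝐲)
      + (3 / 800 * t ^ 2) • (𝐱 ^ 2 * 𝐲 ^ 2)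
      + (1 / 400 * t ^ 3) • (𝐱 ^ 2 * 𝐲 ^ 3) + (-3 / 64000 * t ^ 4) • (𝐱 ^ 4 * 𝐲 ^ 2))
    (by simp [map_ofNat]) (by simp) (by simp) ?_
  refine MvPolynomial.funext fun p ↦ ?_
  simp [fx, fy, fyAddSocle, map_ofNat]
  ring

theorem map_span_shear (t : ℂ) :
    (Ideal.span {(fx : MvPowerSeries (Fin 2) ℂ), ↑(fyAddSocle t)}).map (shear t) =
      Ideal.span {↑fx, ↑fy} := by
  rw [Ideal.map_span, Set.image_pair, ← Matrix.range_cons_cons_empty _ _ ![],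
    ← Matrix.range_cons_cons_empty _ _ ![]]
  refine Ideal.span_range_eq_of_sub_mem_maximalIdeal_mul fun i ↦ ?_
  rw [Matrix.range_cons_cons_empty]
  fin_cases i
  · exact shear_fx_sub_mem t
  · exact shear_fyAddSocle_sub_mem t

theorem modularAlgebra_iso_milnorAlgebra {a c : ℂ} (b : ℂ) (ha : a ≠ 0) (hc : c ≠ 0) :
    Nonempty ((MvPowerSeries (Fin 2) ℂ ⧸
        Ideal.span {X 0 ^ 4 - C a * (X 0 ^ 2 * X 1 ^ 2) + C b * (X 0 ^ 3 * X 1 ^ 2),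
          X 1 ^ 3 - C c * (X 0 ^ 3 * X 1)}) ≃ₐ[ℂ]
      (MvPowerSeries (Fin 2) ℂ ⧸
        Ideal.span {(4 : MvPowerSeries (Fin 2) ℂ) * X 0 ^ 3 + 2 * (X 0 * X 1 ^ 3),
          (5 : MvPowerSeries (Fin 2) ℂ) * X 1 ^ 4 + 3 * (X 0 ^ 2 * X 1 ^ 2)})) := by
  set α := 3 / (10 * a * c)
  have hα : 10 * a * c * α = 3 := by simp only [α]; field_simp
  have hα₀ : α ≠ 0 := by simp [α, ha, hc]
  obtain ⟨ν, hν⟩ := IsAlgClosed.exists_pow_nat_eq (-2 * c * α ^ 3) two_pos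
  have hν₀ : ν ≠ 0 := by rintro rfl; simp [hc, hα₀] at hν
  have hmodular : Ideal.span {X 0 ^ 4 - C a * (X 0 ^ 2 * X 1 ^ 2) + C b * (X 0 ^ 3 * X 1 ^ 2),
      X 1 ^ 3 - C c * (X 0 ^ 3 * X 1)} =
      Ideal.span {(g₁ a b : MvPowerSeries (Fin 2) ℂ), ↑(g₂ c)} := by
    simp [g₁, g₂, smul_eq_C_mul]
  have hjacobian : Ideal.span {(4 : MvPowerSeries (Fin 2) ℂ) * X 0 ^ 3 + 2 * (X 0 * X 1 ^ 3),
      (5 : MvPowerSeries (Fin 2) ℂ) * X 1 ^ 4 + 3 * (X 0 ^ 2 * X 1 ^ 2)} =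
      Ideal.span {(fx : MvPowerSeries (Fin 2) ℂ), ↑fy} := by
    simp [fx, fy]
  rw [hmodular, hjacobian]
  exact ⟨(Ideal.quotientEquivAlg _ _ _ (map_span_swapScale hα₀ hν₀ hν hα).symm).trans
    (Ideal.quotientEquivAlg _ _ _ (map_span_shear _).symm)⟩

end W12

end

/-- The local ring of the modular stratum of the exceptional unimodal singularity
`W₁₂ : f = x⁴ + y⁵ + x²y³` (in minimal embedding, with variables `s₁ = X 0`, `s₂ = X 1`)
is isomorphic, as a local `ℂ`-algebra, to the Milnor algebra
`Q(f) = ℂ[[x,y]]/(4x³ + 2xy³, 5y⁴ + 3x²y²)`. -/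
theorem modularAlgebraW12_iso_milnorAlgebraW12 :
    Nonempty ((MvPowerSeries (Fin 2) ℂ ⧸
        Ideal.span {X 0 ^ 4 - C (σ := Fin 2) (R := ℂ) (30445 / 7392) * (X 0 ^ 2 * X 1 ^ 2)
            + C (σ := Fin 2) (R := ℂ) (4240139 / 1897280) * (X 0 ^ 3 * X 1 ^ 2),
          X 1 ^ 3 - C (σ := Fin 2) (R := ℂ) (2696 / 48125) * (X 0 ^ 3 * X 1)}) ≃ₐ[ℂ]
      (MvPowerSeries (Fin 2) ℂ ⧸
        Ideal.span {(4 : MvPowerSeries (Fin 2) ℂ) * X 0 ^ 3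
            + (2 : MvPowerSeries (Fin 2) ℂ) * (X 0 * X 1 ^ 3),
          (5 : MvPowerSeries (Fin 2) ℂ) * X 1 ^ 4
            + (3 : MvPowerSeries (Fin 2) ℂ) * (X 0 ^ 2 * X 1 ^ 2)})) :=
  W12.modularAlgebra_iso_milnorAlgebra _ (by norm_num) (by norm_num)
end

section
/- For the exceptional unimodal singularity E₁₂ in Hesse form, f = x³ + y⁷ + z² + xy⁵ ∈ ℂ[[x,y,z]], one has μ(f) = dim_ℂ ℂ[[x,y,z]]/(3x² + y⁵, 7y⁶ + 5xy⁴, 2z) = 12 and τ(f) = dim_ℂ ℂ[[x,y,z]]/(f, 3x² + y⁵, 7y⁶ + 5xy⁴, 2z) = 11; in particular τ(f) = μ(f) − 1. -/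
/-!
Modulo the Jacobian ideal `J` one has `z ≡ 0`, `x² ≡ -y⁵/3`, `xy⁴ ≡ -7y⁶/5`, and `y⁸ ∈ J`
since `(147 + 25y) y⁸ ∈ J` with `147 + 25y` a unit. Dividing by generators with leading monomials
`z, x², xy⁴, y⁸` (every other term of a generator has larger degree, so the quotients are built
degree by degree) reduces each power series modulo `J` to the twelve staircase monomials
`1, y, …, y⁷, x, xy, xy², xy³`. These are independent modulo `J`: each is detected by a linear
functional vanishing on `J`, its coefficient corrected by the reductions above.

Since `f` is not quasihomogeneous, the Euler relation has a defect:
`30 f = 10x f_x + 4y f_y + 15z f_z + 2y⁷`, so `(f) + J = J + (y⁷)`. This kills the socle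
monomial `y⁷`, while the other eleven functionals still vanish on all multiples of `y⁷`.
-/

open MvPowerSeries

theorem LinearMap.map_eq_zero_of_mem_ideal_span {K R M : Type*} [CommSemiring K]
    [CommSemiring R] [Algebra K R] [AddCommMonoid M] [Module K M] (ℓ : R →ₗ[K] M) {S : Set R}
    (hS : ∀ g ∈ S, ∀ q, ℓ (q * g) = 0) {x : R} (hx : x ∈ Ideal.span S) : ℓ x = 0 := by
  suffices ∀ q, ℓ (q * x) = 0 by simpa using this 1
  induction hx using Submodule.span_induction with
  | mem g hg => exact hS g hg
  | zero => simp
  | add x y _ _ hx hy => intro q; rw [mul_add, map_add, hx, hy, add_zero]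
  | smul a x _ hx => intro q; rw [smul_eq_mul, ← mul_assoc]; exact hx _

theorem Ideal.finrank_quotient_eq_card_of_dual {K R α : Type*} [Field K] [CommRing R]
    [Algebra K R] [DecidableEq α] (I : Ideal R) (s : Finset α) (v : α → R) (ℓ : α → R →ₗ[K] K)
    (hdual : ∀ i ∈ s, ∀ j ∈ s, ℓ i (v j) = if i = j then 1 else 0)
    (hker : ∀ i ∈ s, ∀ x ∈ I, ℓ i x = 0)
    (hspan : ∀ f, ∃ c : α → K, f - ∑ j ∈ s, c j • v j ∈ I) :
    Module.finrank K (R ⧸ I) = s.card := by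
  let π := (Ideal.Quotient.mkₐ K I).toLinearMap
  have hπ (c : s → K) : π (∑ j : s, c j • v j) = ∑ j : s, c j • π (v j) := by simp
  have hindep : LinearIndependent K (fun j : s => π (v j)) := by
    refine Fintype.linearIndependent_iff.mpr fun c hc i => ?_
    have hmem : ∑ j : s, c j • v j ∈ I := by
      rwa [← Ideal.Quotient.eq_zero_iff_mem, ← Ideal.Quotient.mkₐ_eq_mk K,
        ← AlgHom.toLinearMap_apply, hπ]
    have hℓ (j : s) : ℓ i (c j • v j) = if i = j then c j else 0 := by
      rw [map_smul, hdual i i.2 j j.2]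
      by_cases h : i = j
      · simp [h]
      · simp [h, Subtype.coe_injective.ne h]
    simpa [hℓ] using hker i i.2 _ hmem
  have hspan' : ⊤ ≤ Submodule.span K (Set.range fun j : s => π (v j)) := by
    rintro x -
    obtain ⟨f, rfl⟩ := Ideal.Quotient.mkₐ_surjective K I x
    obtain ⟨c, hc⟩ := hspan f
    rw [← Finset.sum_coe_sort, ← Ideal.Quotient.eq, ← Ideal.Quotient.mkₐ_eq_mk K] at hc
    change π f = π _ at hc
    rw [← AlgHom.toLinearMap_apply, hc, hπ (fun j => c j)]
    exact Submodule.sum_mem _ fun j _ => Submodule.smul_mem _ _ (Submodule.subset_span ⟨j, rfl⟩)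
  rw [Module.finrank_eq_card_basis (Module.Basis.mk hindep hspan'), Fintype.card_coe]

namespace E12

noncomputable section

local notation "ℂ⟦x,y,z⟧" => MvPowerSeries (Fin 3) ℂ

def exps (a b c : ℕ) : Fin 3 →₀ ℕ :=
  Finsupp.single 0 a + Finsupp.single 1 b + Finsupp.single 2 c

@[simp] lemma exps_apply_zero (a b c : ℕ) : exps a b c 0 = a := by simp [exps]
@[simp] lemma exps_apply_one (a b c : ℕ) : exps a b c 1 = b := by simp [exps]
@[simp] lemma exps_apply_two (a b c : ℕ) : exps a b c 2 = c := by simp [exps]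

lemma exps_le_iff {a b c : ℕ} {d : Fin 3 →₀ ℕ} :
    exps a b c ≤ d ↔ a ≤ d 0 ∧ b ≤ d 1 ∧ c ≤ d 2 := by
  simp [Finsupp.le_def, Fin.forall_fin_succ]

lemma eq_exps_iff {a b c : ℕ} {d : Fin 3 →₀ ℕ} :
    d = exps a b c ↔ d 0 = a ∧ d 1 = b ∧ d 2 = c := by
  simp [Finsupp.ext_iff, Fin.forall_fin_succ]

lemma exps_eta (d : Fin 3 →₀ ℕ) : exps (d 0) (d 1) (d 2) = d :=
  (eq_exps_iff.mpr ⟨rfl, rfl, rfl⟩).symm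

def mon (a b c : ℕ) : ℂ⟦x,y,z⟧ := monomial (exps a b c) 1

lemma mon_eq (a b c : ℕ) : mon a b c = X 0 ^ a * X 1 ^ b * X 2 ^ c := by
  simp only [mon, X_pow_eq, monomial_mul_monomial, mul_one, exps]

lemma X_two_eq_mon : (X 2 : ℂ⟦x,y,z⟧) = mon 0 0 1 := by simp [mon_eq]

lemma X_zero_pow_eq_mon (n : ℕ) : (X 0 : ℂ⟦x,y,z⟧) ^ n = mon n 0 0 := by simp [mon_eq]

lemma X_one_pow_eq_mon (n : ℕ) : (X 1 : ℂ⟦x,y,z⟧) ^ n = mon 0 n 0 := by simp [mon_eq]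

lemma X_zero_mul_mon (n : ℕ) : (X 0 : ℂ⟦x,y,z⟧) * mon 0 n 0 = mon 1 n 0 := by simp [mon_eq]

lemma ofNat_eq_C (n : ℕ) [n.AtLeastTwo] : (OfNat.ofNat n : ℂ⟦x,y,z⟧) = C (OfNat.ofNat n) :=
  (map_ofNat C n).symm

def ofCoeffs (Q : ℕ → ℕ → ℕ → ℂ) : ℂ⟦x,y,z⟧ := fun d => Q (d 0) (d 1) (d 2)

@[simp] lemma coeff_ofCoeffs (Q : ℕ → ℕ → ℕ → ℂ) (d : Fin 3 →₀ ℕ) :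
    coeff d (ofCoeffs Q) = Q (d 0) (d 1) (d 2) := rfl

lemma exists_eq_ofCoeffs (f : ℂ⟦x,y,z⟧) : ∃ Q, f = ofCoeffs Q :=
  ⟨fun a b c => coeff (exps a b c) f, ext fun d => by simp [exps_eta]⟩

lemma coeff_mon (a b c : ℕ) (d : Fin 3 →₀ ℕ) :
    coeff d (mon a b c) = if d 0 = a ∧ d 1 = b ∧ d 2 = c then 1 else 0 := by
  simp only [mon, coeff_monomial, eq_exps_iff]

lemma coeff_mon_mul_ofCoeffs (i j k : ℕ) (Q : ℕ → ℕ → ℕ → ℂ) (d : Fin 3 →₀ ℕ) :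
    coeff d (mon i j k * ofCoeffs Q) =
      if i ≤ d 0 ∧ j ≤ d 1 ∧ k ≤ d 2 then Q (d 0 - i) (d 1 - j) (d 2 - k) else 0 := by
  simp [mon, coeff_monomial_mul, exps_le_iff]

def shift (i j k : ℕ) (G : ℕ → ℕ → ℕ → ℂ) : ℂ⟦x,y,z⟧ :=
  ofCoeffs fun a b c => G (a + i) (b + j) (c + k)

lemma coeff_mon_mul_shift (i j k : ℕ) (G : ℕ → ℕ → ℕ → ℂ) (d : Fin 3 →₀ ℕ) :
    coeff d (mon i j k * shift i j k G) =
      if i ≤ d 0 ∧ j ≤ d 1 ∧ k ≤ d 2 then G (d 0) (d 1) (d 2) else 0 := by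
  rw [shift, coeff_mon_mul_ofCoeffs]
  split_ifs with h
  · simp only [Nat.sub_add_cancel h.1, Nat.sub_add_cancel h.2.1, Nat.sub_add_cancel h.2.2]
  · rfl

def staircase : Finset (ℕ × ℕ) := {0} ×ˢ Finset.range 8 ∪ {1} ×ˢ Finset.range 4

lemma mem_staircase {a b : ℕ} : (a, b) ∈ staircase ↔ a = 0 ∧ b < 8 ∨ a = 1 ∧ b < 4 := by
  simp [staircase]
  omega

/-- Division of `ofCoeffs F` by `2z, 3x² + y⁵, 7y⁶ + 5xy⁴, y⁸`, read at `x^a y^b z^c`: the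
normalized quotient coefficient of the first of the leading monomials `z, x², xy⁴, y⁸` dividing
`x^a y^b z^c`, or the remainder coefficient if it lies on the staircase. The subtracted terms
are the contributions of the non-leading terms `y⁵` and `7y⁶`, from smaller `a + b`. -/
def divCoeff (F : ℕ → ℕ → ℕ → ℂ) (a b c : ℕ) : ℂ :=
  F a b c
    - (if 5 ≤ b ∧ c = 0 then 3⁻¹ * divCoeff F (a + 2) (b - 5) c else 0)
    - (if 6 ≤ b ∧ a = 0 ∧ c = 0 then 7 / 5 * divCoeff F (a + 1) (b - 6 + 4) c else 0)
termination_by a + b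
decreasing_by all_goals omega

lemma self_eq_divCoeff_add (F : ℕ → ℕ → ℕ → ℂ) (a b c : ℕ) :
    F a b c = divCoeff F a b c
      + (if 5 ≤ b ∧ c = 0 then 3⁻¹ * divCoeff F (a + 2) (b - 5) c else 0)
      + (if 6 ≤ b ∧ a = 0 ∧ c = 0 then 7 / 5 * divCoeff F (a + 1) (b - 6 + 4) c else 0) := by
  rw [divCoeff]
  ring

def remainderCoeff (F : ℕ → ℕ → ℕ → ℂ) (a b c : ℕ) : ℂ :=
  if c = 0 ∧ (a, b) ∈ staircase then divCoeff F a b c else 0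

lemma exists_division (F : ℕ → ℕ → ℕ → ℂ) : ∃ qz q1 q2 q8 : ℂ⟦x,y,z⟧,
    ofCoeffs F = 2 * X 2 * qz + (3 * X 0 ^ 2 + X 1 ^ 5) * q1
      + (7 * X 1 ^ 6 + 5 * (X 0 * X 1 ^ 4)) * q2 + X 1 ^ 8 * q8
      + ofCoeffs (remainderCoeff F) := by
  refine ⟨shift 0 0 1 fun a b c => 2⁻¹ * divCoeff F a b c,
    shift 2 0 0 fun a b c => if c = 0 then 3⁻¹ * divCoeff F a b c else 0,
    shift 1 4 0 fun a b c => if a = 1 ∧ c = 0 then 5⁻¹ * divCoeff F a b c else 0,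
    shift 0 8 0 fun a b c => if a = 0 ∧ c = 0 then divCoeff F a b c else 0, ?_⟩
  ext d
  simp only [X_two_eq_mon, X_zero_pow_eq_mon, X_one_pow_eq_mon, X_zero_mul_mon, ofNat_eq_C,
    add_mul, mul_assoc, map_add, coeff_C_mul, coeff_mon_mul_shift]
  simp only [shift, coeff_mon_mul_ofCoeffs, coeff_ofCoeffs, remainderCoeff, zero_le, true_and,
    and_true, Nat.sub_zero, add_zero]
  generalize d 0 = a, d 1 = b, d 2 = c
  rw [self_eq_divCoeff_add F]
  -- `x^a y^b z^c` is charged to the first of `z, x², xy⁴, y⁸` dividing it, or lies on the staircase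
  obtain hc | ⟨rfl, ha⟩ | ⟨rfl, rfl, hb⟩ | ⟨rfl, rfl, hb⟩ | ⟨rfl, rfl, hb⟩ | ⟨rfl, rfl, hb⟩ :
      1 ≤ c ∨ c = 0 ∧ 2 ≤ a ∨ c = 0 ∧ a = 1 ∧ 4 ≤ b ∨ c = 0 ∧ a = 0 ∧ 8 ≤ b ∨
        c = 0 ∧ a = 1 ∧ b < 4 ∨ c = 0 ∧ a = 0 ∧ b < 8 := by
    omega
  · simp [hc, show c ≠ 0 by omega]
  · have hs : (a, b) ∉ staircase := by rw [mem_staircase]; omega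
    simp [ha, show a ≠ 0 by omega, show a ≠ 1 by omega, hs]
  · have hs : (1, b) ∉ staircase := by rw [mem_staircase]; omega
    simp [hb, hs]
    ring
  · have hs : (0, b) ∉ staircase := by rw [mem_staircase]; omega
    simp [hb, hs]
    split_ifs <;> ring
  · have hs : (1, b) ∈ staircase := by rw [mem_staircase]; omega
    simp [hs, show ¬ 4 ≤ b by omega]
    ring
  · have hs : (0, b) ∈ staircase := by rw [mem_staircase]; omega
    simp [hs, show ¬ 8 ≤ b by omega]
    split_ifs <;> ring

lemma ofCoeffs_remainderCoeff (F : ℕ → ℕ → ℕ → ℂ) :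
    ofCoeffs (remainderCoeff F) = ∑ p ∈ staircase, divCoeff F p.1 p.2 0 • mon p.1 p.2 0 := by
  ext d
  have hd (p : ℕ × ℕ) : (d 0 = p.1 ∧ d 1 = p.2 ∧ d 2 = 0) ↔ ((d 0, d 1) = p ∧ d 2 = 0) := by
    rw [Prod.ext_iff, and_assoc]
  simp only [coeff_ofCoeffs, remainderCoeff, map_sum, coeff_smul, coeff_mon, hd, ite_and]
  by_cases h2 : d 2 = 0 <;> simp [h2]

def jacobianGens : Set ℂ⟦x,y,z⟧ :=
  {(3 : ℂ⟦x,y,z⟧) * X 0 ^ 2 + X 1 ^ 5,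
    (7 : ℂ⟦x,y,z⟧) * X 1 ^ 6 + (5 : ℂ⟦x,y,z⟧) * (X 0 * X 1 ^ 4),
    (2 : ℂ⟦x,y,z⟧) * X 2}

def jacobianIdeal : Ideal ℂ⟦x,y,z⟧ := Ideal.span jacobianGens

def tjurinaIdeal : Ideal ℂ⟦x,y,z⟧ :=
  Ideal.span (insert (X 0 ^ 3 + X 1 ^ 7 + X 2 ^ 2 + X 0 * X 1 ^ 5) jacobianGens)

lemma X_one_pow_eight_mem_jacobianIdeal : X 1 ^ 8 ∈ jacobianIdeal := by
  have hunit : IsUnit (147 + 25 * X 1 : ℂ⟦x,y,z⟧) :=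
    isUnit_iff_constantCoeff.mpr (by simp [ofNat_eq_C])
  have hrel : (147 + 25 * X 1 : ℂ⟦x,y,z⟧) * X 1 ^ 8 = 25 * X 1 ^ 4 * (3 * X 0 ^ 2 + X 1 ^ 5)
      + (21 * X 1 ^ 2 - 15 * X 0) * (7 * X 1 ^ 6 + 5 * (X 0 * X 1 ^ 4)) := by ring
  rw [← Ideal.unit_mul_mem_iff_mem _ hunit, hrel]
  exact add_mem (Ideal.mul_mem_left _ _ (Ideal.subset_span (by simp [jacobianGens])))
    (Ideal.mul_mem_left _ _ (Ideal.subset_span (by simp [jacobianGens])))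

lemma exists_sub_sum_mem_jacobianIdeal (f : ℂ⟦x,y,z⟧) :
    ∃ c : ℕ × ℕ → ℂ, f - ∑ p ∈ staircase, c p • mon p.1 p.2 0 ∈ jacobianIdeal := by
  obtain ⟨F, rfl⟩ := exists_eq_ofCoeffs f
  obtain ⟨qz, q1, q2, q8, hF⟩ := exists_division F
  refine ⟨fun p => divCoeff F p.1 p.2 0, ?_⟩
  have hgen {g : ℂ⟦x,y,z⟧} (hg : g ∈ jacobianGens) (q : ℂ⟦x,y,z⟧) : g * q ∈ jacobianIdeal :=
    Ideal.mul_mem_right _ _ (Ideal.subset_span hg)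
  rw [← ofCoeffs_remainderCoeff, hF, add_sub_cancel_right]
  refine add_mem (add_mem (add_mem ?_ ?_) ?_)
    (Ideal.mul_mem_right _ _ X_one_pow_eight_mem_jacobianIdeal) <;>
    exact hgen (by simp [jacobianGens]) _

/-- The coefficient of `x^a y^b` after the reductions `x² ↦ -y⁵/3`, `xy⁴ ↦ -7y⁶/5`
(hence `x³ ↦ 7y⁷/15`) that are valid modulo the Jacobian ideal. -/
def stairDual (p : ℕ × ℕ) : ℂ⟦x,y,z⟧ →ₗ[ℂ] ℂ :=
  coeff (exps p.1 p.2 0)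
    - (if 6 ≤ p.2 then (7 / 5 : ℂ) else 0) • coeff (exps (p.1 + 1) (p.2 - 2) 0)
    - (if 5 ≤ p.2 then (3⁻¹ : ℂ) else 0) • coeff (exps (p.1 + 2) (p.2 - 5) 0)
    + (if 7 ≤ p.2 then (7 / 15 : ℂ) else 0) • coeff (exps (p.1 + 3) (p.2 - 7) 0)

lemma stairDual_mon {p p' : ℕ × ℕ} (hp : p ∈ staircase) (hp' : p' ∈ staircase) :
    stairDual p (mon p'.1 p'.2 0) = if p = p' then 1 else 0 := by
  obtain ⟨a, b⟩ := p
  obtain ⟨a', b'⟩ := p'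
  rw [mem_staircase] at hp hp'
  simp only [stairDual, LinearMap.add_apply, LinearMap.sub_apply, LinearMap.smul_apply,
    coeff_mon, exps_apply_zero, exps_apply_one, exps_apply_two, Prod.mk.injEq, and_true]
  split_ifs <;> first | omega | simp

lemma stairDual_mul_eq_zero {p : ℕ × ℕ} (hp : p ∈ staircase) {g : ℂ⟦x,y,z⟧}
    (hg : g ∈ jacobianGens) (q : ℂ⟦x,y,z⟧) : stairDual p (q * g) = 0 := by
  obtain ⟨Q, rfl⟩ := exists_eq_ofCoeffs q
  obtain ⟨a, b⟩ := p
  rw [mem_staircase] at hp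
  simp only [jacobianGens, Set.mem_insert_iff, Set.mem_singleton_iff] at hg
  rcases hg with rfl | rfl | rfl <;>
  · rw [mul_comm]
    simp only [X_two_eq_mon, X_zero_pow_eq_mon, X_one_pow_eq_mon, X_zero_mul_mon, ofNat_eq_C,
      add_mul, mul_assoc, stairDual]
    rcases hp with ⟨rfl, hb⟩ | ⟨rfl, hb⟩ <;> interval_cases b <;>
      simp [coeff_mon_mul_ofCoeffs] <;> ring

lemma stairDual_mul_X_one_pow_seven {p : ℕ × ℕ} (hp : p ∈ staircase.erase (0, 7))
    (q : ℂ⟦x,y,z⟧) : stairDual p (q * X 1 ^ 7) = 0 := by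
  obtain ⟨Q, rfl⟩ := exists_eq_ofCoeffs q
  obtain ⟨a, b⟩ := p
  rw [Finset.mem_erase, mem_staircase] at hp
  rw [mul_comm, X_one_pow_eq_mon]
  simp only [stairDual, LinearMap.add_apply, LinearMap.sub_apply, LinearMap.smul_apply,
    coeff_mon_mul_ofCoeffs]
  rcases hp with ⟨hne, ⟨rfl, hb⟩ | ⟨rfl, hb⟩⟩ <;> interval_cases b <;> simp_all

theorem finrank_jacobianIdeal : Module.finrank ℂ (ℂ⟦x,y,z⟧ ⧸ jacobianIdeal) = 12 :=
  Ideal.finrank_quotient_eq_card_of_dual jacobianIdeal staircase (fun p => mon p.1 p.2 0)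
    stairDual (fun _ hi _ hj => stairDual_mon hi hj)
    (fun i hi _ hx => (stairDual i).map_eq_zero_of_mem_ideal_span
      (fun _ hg q => stairDual_mul_eq_zero hi hg q) hx)
    exists_sub_sum_mem_jacobianIdeal

lemma tjurinaIdeal_eq_sup : tjurinaIdeal = jacobianIdeal ⊔ Ideal.span {X 1 ^ 7} := by
  have hrel : (30 : ℂ⟦x,y,z⟧) * (X 0 ^ 3 + X 1 ^ 7 + X 2 ^ 2 + X 0 * X 1 ^ 5)
      = 10 * X 0 * (3 * X 0 ^ 2 + X 1 ^ 5) + 4 * X 1 * (7 * X 1 ^ 6 + 5 * (X 0 * X 1 ^ 4))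
        + 15 * X 2 * (2 * X 2) + 2 * X 1 ^ 7 := by ring
  have hJ : 10 * X 0 * (3 * X 0 ^ 2 + X 1 ^ 5) + 4 * X 1 * (7 * X 1 ^ 6 + 5 * (X 0 * X 1 ^ 4))
      + 15 * X 2 * (2 * X 2) ∈ jacobianIdeal := by
    refine add_mem (add_mem ?_ ?_) ?_ <;>
      exact Ideal.mul_mem_left _ _ (Ideal.subset_span (by simp [jacobianGens]))
  have hunit (n : ℕ) [n.AtLeastTwo] : IsUnit (OfNat.ofNat n : ℂ⟦x,y,z⟧) :=
    isUnit_iff_constantCoeff.mpr (by simp [ofNat_eq_C])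
  apply le_antisymm
  · refine Ideal.span_le.mpr
      (Set.insert_subset ?_ fun g hg => Ideal.mem_sup_left (Ideal.subset_span hg))
    rw [SetLike.mem_coe, ← Ideal.unit_mul_mem_iff_mem _ (hunit 30), hrel]
    exact add_mem (Ideal.mem_sup_left hJ)
      (Ideal.mem_sup_right (Ideal.mul_mem_left _ _ (Ideal.mem_span_singleton_self _)))
  · refine sup_le (Ideal.span_mono (Set.subset_insert _ _)) (Ideal.span_le.mpr ?_)
    rw [Set.singleton_subset_iff, SetLike.mem_coe, ← Ideal.unit_mul_mem_iff_mem _ (hunit 2),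
      eq_sub_of_add_eq' hrel.symm]
    exact sub_mem (Ideal.mul_mem_left _ _ (Ideal.subset_span (Set.mem_insert _ _)))
      (Ideal.span_mono (Set.subset_insert _ _) hJ)

theorem finrank_tjurinaIdeal : Module.finrank ℂ (ℂ⟦x,y,z⟧ ⧸ tjurinaIdeal) = 11 := by
  refine (Ideal.finrank_quotient_eq_card_of_dual tjurinaIdeal (staircase.erase (0, 7))
    (fun p => mon p.1 p.2 0) stairDual
    (fun _ hi _ hj => stairDual_mon (Finset.mem_of_mem_erase hi) (Finset.mem_of_mem_erase hj))
    (fun i hi x hx => ?_) (fun f => ?_)).trans rfl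
  · rw [tjurinaIdeal_eq_sup, jacobianIdeal, ← Ideal.span_union] at hx
    refine (stairDual i).map_eq_zero_of_mem_ideal_span (fun g hg q => ?_) hx
    rcases hg with hg | rfl
    · exact stairDual_mul_eq_zero (Finset.mem_of_mem_erase hi) hg q
    · exact stairDual_mul_X_one_pow_seven hi q
  · obtain ⟨c, hc⟩ := exists_sub_sum_mem_jacobianIdeal f
    refine ⟨c, ?_⟩
    rw [← Finset.add_sum_erase _ _ (show (0, 7) ∈ staircase by decide), sub_add_eq_sub_sub] at hc
    have h7 : c (0, 7) • mon 0 7 0 ∈ jacobianIdeal ⊔ Ideal.span {X 1 ^ 7} := by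
      rw [smul_eq_C_mul, ← X_one_pow_eq_mon]
      exact Ideal.mul_mem_left _ _ (Ideal.mem_sup_right (Ideal.mem_span_singleton_self _))
    rw [tjurinaIdeal_eq_sup, ← sub_add_cancel (f - _) (c (0, 7) • mon 0 7 0), sub_right_comm]
    exact add_mem (Ideal.mem_sup_left hc) h7

end

end E12

/-- For the exceptional unimodal singularity `E₁₂` in Hesse form,
`f = x³ + y⁷ + z² + xy⁵`, the Milnor number is `μ(f) = 12` and the Tjurina number is
`τ(f) = 11`; in particular `τ(f) = μ(f) - 1`. -/
theorem milnor_tjurina_E12 :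
    Module.finrank ℂ (MvPowerSeries (Fin 3) ℂ ⧸
        (Ideal.span {(3 : MvPowerSeries (Fin 3) ℂ) * X 0 ^ 2 + X 1 ^ 5,
          (7 : MvPowerSeries (Fin 3) ℂ) * X 1 ^ 6
            + (5 : MvPowerSeries (Fin 3) ℂ) * (X 0 * X 1 ^ 4),
          (2 : MvPowerSeries (Fin 3) ℂ) * X 2})) = 12 ∧
    Module.finrank ℂ (MvPowerSeries (Fin 3) ℂ ⧸
        (Ideal.span {X 0 ^ 3 + X 1 ^ 7 + X 2 ^ 2 + X 0 * X 1 ^ 5,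
          (3 : MvPowerSeries (Fin 3) ℂ) * X 0 ^ 2 + X 1 ^ 5,
          (7 : MvPowerSeries (Fin 3) ℂ) * X 1 ^ 6
            + (5 : MvPowerSeries (Fin 3) ℂ) * (X 0 * X 1 ^ 4),
          (2 : MvPowerSeries (Fin 3) ℂ) * X 2})) = 11 :=
  ⟨E12.finrank_jacobianIdeal, E12.finrank_tjurinaIdeal⟩
end
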